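/- Let A be a finite-dimensional gentle algebra over an algebraically closed field k and let e be an idempotent of A. Then the factor algebra A/⟨e⟩ of A by the two-sided ideal generated by e is also a gentle algebra. -/

import Mathlib

/-!
Common definitions for formalizing "On support τ-tilting graphs of gentle algebras"
(Fu–Geng–Liu–Zhou).

We work with the category `ModuleCat B` of (left) `B`-modules over a ring `B`
(for a finite-dimensional algebra, left and right modules play symmetric roles).
Finitely generated modules are singled out by `Module.Finite`.

τ-rigidity is formalized through the Auslander–Smalø characterization:
for finitely generated modules over a finite-dimensional algebra,
`Hom_A(M, τN) = 0` if and only if `Ext¹_A(N, Fac M) = 0`; in particular `M` is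
τ-rigid (i.e. `Hom_A(M, τM) = 0`, with `τ` the Auslander–Reiten translation)
iff every short exact sequence `0 → X → E → M → 0` with `X ∈ Fac M` splits.
This avoids a (currently unavailable) construction of the AR translation while
being provably equivalent to the paper's definition.
-/

open CategoryTheory CategoryTheory.Limits

namespace STT

variable (B : Type) [Ring B]

/-- `N` is (isomorphic to) a direct summand of `M`. -/
def IsSummand (N M : ModuleCat.{0} B) : Prop :=
  ∃ (i : N ⟶ M) (r : M ⟶ N), i ≫ r = 𝟙 N

/-- `M` is an indecomposable object of `mod B`: finitely generated, nonzero, and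
every direct summand is zero or the whole of `M`. -/
def Indecomp (M : ModuleCat.{0} B) : Prop :=
  Module.Finite B M ∧ ¬ IsZero M ∧
    ∀ N : ModuleCat.{0} B, IsSummand B N M → IsZero N ∨ Nonempty (N ≅ M)

/-- The setoid identifying isomorphic modules. -/
def isoSetoid : Setoid (ModuleCat.{0} B) where
  r M N := Nonempty (M ≅ N)
  iseqv := ⟨fun M => ⟨Iso.refl M⟩, fun h => h.elim fun e => ⟨e.symm⟩,
    fun h h' => h.elim fun e => h'.elim fun f => ⟨e ≪≫ f⟩⟩

/-- `|M|`: the number of pairwise non-isomorphic indecomposable direct summands of `M`. -/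
noncomputable def numIndec (M : ModuleCat.{0} B) : ℕ :=
  Nat.card (Quotient (Setoid.comap
    (fun N : {N : ModuleCat.{0} B // Indecomp B N ∧ IsSummand B N M} => N.val) (isoSetoid B)))

/-- `|B|`: the number of pairwise non-isomorphic indecomposable direct summands of the
regular module, i.e. the number of simple `B`-modules for `B` basic. -/
noncomputable def algRank : ℕ := numIndec B (ModuleCat.of B B)

/-- `X ∈ Fac M`: `X` is a factor module of a (finite) direct sum of copies of `M`. -/
def InFac (M X : ModuleCat.{0} B) : Prop :=
  ∃ (n : ℕ) (f : (⨁ fun _ : Fin n => M) ⟶ X), Epi f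

/-- `M` is τ-rigid, via the Auslander–Smalø characterization:
`Hom_B(M, τM) = 0` iff every short exact sequence `0 → X → E → M → 0` with
`X ∈ Fac M` splits (i.e. `Ext¹_B(M, Fac M) = 0`). -/
def IsTauRigid (M : ModuleCat.{0} B) : Prop :=
  ∀ (X E : ModuleCat.{0} B) (i : X ⟶ E) (p : E ⟶ M) (w : i ≫ p = 0),
    (ShortComplex.mk i p w).ShortExact → InFac B M X → ∃ s : M ⟶ E, s ≫ p = 𝟙 M

/-- `(M, P)` is a τ-rigid pair: `M` is a finitely generated τ-rigid module and `P` is a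
finitely generated projective module with `Hom_B(P, M) = 0`. -/
def IsTauRigidPair (M P : ModuleCat.{0} B) : Prop :=
  Module.Finite B M ∧ Module.Finite B P ∧ IsTauRigid B M ∧
    Projective P ∧ ∀ f : P ⟶ M, f = 0

/-- `M` is basic: no indecomposable module occurs twice as a direct summand. -/
def IsBasic (M : ModuleCat.{0} B) : Prop :=
  ∀ N : ModuleCat.{0} B, Indecomp B N → ¬ IsSummand B (N ⊞ N) M

/-- Both members of the pair are basic. -/
def IsBasicPair (M P : ModuleCat.{0} B) : Prop := IsBasic B M ∧ IsBasic B P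

/-- `(M, P)` is a support τ-tilting pair: a τ-rigid pair with `|M| + |P| = |B|`. -/
def IsSuppPair (M P : ModuleCat.{0} B) : Prop :=
  IsTauRigidPair B M P ∧ numIndec B M + numIndec B P = algRank B

/-- `(L, R)` is a direct summand of the pair `(M, P)`. -/
def PairSummand (L R M P : ModuleCat.{0} B) : Prop := IsSummand B L M ∧ IsSummand B R P

/-- The pairs `(M, P)` and `(N, Q)` are isomorphic. -/
def PairIso (M P N Q : ModuleCat.{0} B) : Prop := Nonempty (M ≅ N) ∧ Nonempty (P ≅ Q)

/-- `(M,P)` and `(N,Q)` are mutations of each other: both are basic support τ-tilting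
pairs, they are not isomorphic, and they share a common almost complete support
τ-tilting pair (a basic τ-rigid pair with `|B| - 1` indecomposable summands) as a direct
summand; equivalently, they differ in exactly one indecomposable direct summand. -/
def AreMutation (M P N Q : ModuleCat.{0} B) : Prop :=
  IsBasicPair B M P ∧ IsSuppPair B M P ∧ IsBasicPair B N Q ∧ IsSuppPair B N Q ∧
  ¬ PairIso B M P N Q ∧
  ∃ L R : ModuleCat.{0} B, IsBasicPair B L R ∧ IsTauRigidPair B L R ∧
    numIndec B L + numIndec B R + 1 = algRank B ∧
    PairSummand B L R M P ∧ PairSummand B L R N Q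

/-- The type of basic support τ-tilting pairs. -/
def STP : Type 1 :=
  {p : ModuleCat.{0} B × ModuleCat.{0} B // IsBasicPair B p.1 p.2 ∧ IsSuppPair B p.1 p.2}

/-- The setoid identifying isomorphic basic support τ-tilting pairs. -/
def stpSetoid : Setoid (STP B) where
  r p q := PairIso B p.val.1 p.val.2 q.val.1 q.val.2
  iseqv := ⟨fun p => ⟨⟨Iso.refl _⟩, ⟨Iso.refl _⟩⟩,
    fun h => ⟨h.1.elim fun e => ⟨e.symm⟩, h.2.elim fun e => ⟨e.symm⟩⟩,
    fun h h' => ⟨h.1.elim fun e => h'.1.elim fun f => ⟨e ≪≫ f⟩,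
      h.2.elim fun e => h'.2.elim fun f => ⟨e ≪≫ f⟩⟩⟩

/-- Isomorphism classes of basic support τ-tilting pairs: the vertices of the
support τ-tilting graph. -/
def STPClass : Type 1 := Quotient (stpSetoid B)

/-- Two basic support τ-tilting pairs share an almost complete support τ-tilting pair
as a common direct summand. -/
def MutationAdj (p q : STP B) : Prop :=
  ∃ L R : ModuleCat.{0} B, IsBasicPair B L R ∧ IsTauRigidPair B L R ∧
    numIndec B L + numIndec B R + 1 = algRank B ∧
    PairSummand B L R p.val.1 p.val.2 ∧ PairSummand B L R q.val.1 q.val.2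

/-- The support τ-tilting graph `H(sτ-tilt B)`: vertices are the isomorphism classes of
basic support τ-tilting pairs, and two distinct classes are joined by an edge iff they
are mutations of each other (i.e. they differ in exactly one indecomposable direct
summand, equivalently they share a common almost complete direct summand). -/
def tauTiltingGraph : SimpleGraph (STPClass B) where
  Adj x y := x ≠ y ∧ ∃ p q : STP B,
    Quotient.mk (stpSetoid B) p = x ∧ Quotient.mk (stpSetoid B) q = y ∧ MutationAdj B p q
  symm := by
    refine ⟨?_⟩
    rintro x y ⟨h, p, q, hp, hq, L, R, h1, h2, h3, h4, h5⟩
    exact ⟨h.symm, q, p, hq, hp, L, R, h1, h2, h3, h5, h4⟩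
  loopless := by refine ⟨?_⟩; rintro x ⟨h, -⟩; exact h rfl

/-- The face of the support τ-tilting graph determined by a τ-rigid pair `(L, R)`:
all (isomorphism classes of) basic support τ-tilting pairs admitting `(L, R)` as a
direct summand. -/
def faceSet (L R : ModuleCat.{0} B) : Set (STPClass B) :=
  {x | ∃ p : STP B, Quotient.mk (stpSetoid B) p = x ∧ PairSummand B L R p.val.1 p.val.2}

/-- `B` has the reachable-in-face property: whenever two basic support τ-tilting pairs
having a common direct summand `(L, R)` are connected by a path in the support
τ-tilting graph, they are connected by a path lying in the face `F_{(L,R)}`. -/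
def ReachableInFace : Prop :=
  ∀ (L R : ModuleCat.{0} B), IsBasicPair B L R → IsTauRigidPair B L R →
    ∀ (x y : STPClass B) (hx : x ∈ faceSet B L R) (hy : y ∈ faceSet B L R),
      (tauTiltingGraph B).Reachable x y →
      ((tauTiltingGraph B).induce (faceSet B L R)).Reachable ⟨x, hx⟩ ⟨y, hy⟩

/-- The pair `(M, P)` is indecomposable: `|M| + |P| = 1`. -/
def IndecPair (M P : ModuleCat.{0} B) : Prop := numIndec B M + numIndec B P = 1

/-- `(M,P)` is τ-reachable from `(N,Q)`: there is a sequence of (nonzero) τ-rigid pairs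
`(M₁,P₁), …, (M_s,P_s)` such that the pairs `(M ⊕ M₁, P ⊕ P₁)`, `(M₁ ⊕ M₂, P₁ ⊕ P₂)`,
…, `(M_s ⊕ N, P_s ⊕ Q)` are all τ-rigid pairs.  (The intermediate pairs are required
to be nonzero, as is implicit in the paper: compare Remarks 3.5 and 3.6 there.) -/
def TauReachable (M P N Q : ModuleCat.{0} B) : Prop :=
  ∃ (s : ℕ) (c : Fin (s + 2) → ModuleCat.{0} B × ModuleCat.{0} B),
    c 0 = (M, P) ∧ c (Fin.last (s + 1)) = (N, Q) ∧
    (∀ j : Fin (s + 2), j ≠ 0 → j ≠ Fin.last (s + 1) →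
      ¬ (IsZero (c j).1 ∧ IsZero (c j).2)) ∧
    ∀ i : Fin (s + 1),
      IsTauRigidPair B ((c i.castSucc).1 ⊞ (c i.succ).1) ((c i.castSucc).2 ⊞ (c i.succ).2)

/-- `B` has the τ-reachable property: any two indecomposable τ-rigid pairs are
τ-reachable from each other. -/
def TauReachableProp : Prop :=
  ∀ M P N Q : ModuleCat.{0} B, IsTauRigidPair B M P → IndecPair B M P →
    IsTauRigidPair B N Q → IndecPair B N Q → TauReachable B M P N Q

/-- The partial order on support τ-tilting pairs: `Fac M ⊆ Fac N`. -/
def FacLE (M N : ModuleCat.{0} B) : Prop := ∀ X, InFac B M X → InFac B N X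

/-- `(T, R)` is the Bongartz completion of the τ-rigid pair `(U, R)`: the maximal basic
support τ-tilting pair admitting `(U, R)` as a direct summand. -/
def IsBongartz (U R T : ModuleCat.{0} B) : Prop :=
  IsBasicPair B T R ∧ IsSuppPair B T R ∧ IsSummand B U T ∧
    ∀ M P : ModuleCat.{0} B, IsBasicPair B M P → IsSuppPair B M P →
      PairSummand B U R M P → FacLE B M T

/-- `e ∈ End(T)` is the idempotent corresponding to a direct summand `U` of `T`
(for some choice of splitting). -/
def IsIdemFor (U T : ModuleCat.{0} B) (e : End T) : Prop :=
  ∃ (s : U ⟶ T) (r : T ⟶ U), s ≫ r = 𝟙 U ∧ e = r ≫ s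

/-- The algebra `B_{(U,R)} = End_B(T_{(U,R)}) / ⟨e_U⟩`: the quotient of the endomorphism
algebra of the Bongartz completion by the two-sided ideal generated by the idempotent
corresponding to the summand `U`. -/
abbrev quotAlg (T : ModuleCat.{0} B) (e : End T) : Type :=
  RingQuot (fun a b : End T => a = e ∧ b = 0)

/-- `B` is totally τ-reachable: for every basic τ-rigid pair `(U, R)`
(and any realization `T` of its Bongartz completion and idempotent `e = e_U`),
the algebra `B_{(U,R)} = End(T)/⟨e_U⟩` has the τ-reachable property whenever
`|B_{(U,R)}| > 1`. -/
def TotallyTauReachable : Prop :=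
  ∀ (U R : ModuleCat.{0} B), IsBasicPair B U R → IsTauRigidPair B U R →
    ∀ (T : ModuleCat.{0} B), IsBongartz B U R T →
      ∀ e : End T, IsIdemFor B U T e →
        1 < algRank (quotAlg B T e) → TauReachableProp (quotAlg B T e)

/-- `X ∈ ^⊥(τU)`, via the Auslander–Smalø characterization: `Hom_B(X, τU) = 0` iff
`Ext¹_B(U, Fac X) = 0`, i.e. every short exact sequence `0 → N → E → U → 0` with
`N ∈ Fac X` splits. -/
def InPerpTau (U X : ModuleCat.{0} B) : Prop :=
  ∀ (N E : ModuleCat.{0} B) (i : N ⟶ E) (p : E ⟶ U) (w : i ≫ p = 0),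
    (ShortComplex.mk i p w).ShortExact → InFac B X N → ∃ s : U ⟶ E, s ≫ p = 𝟙 U

/-- The subcategory `W(U,R) = ^⊥(τU) ∩ R^⊥ ∩ U^⊥` of `mod B`. -/
def Wcat (U R : ModuleCat.{0} B) : Set (ModuleCat.{0} B) :=
  {X | Module.Finite B X ∧ InPerpTau B U X ∧ (∀ f : R ⟶ X, f = 0) ∧ (∀ f : U ⟶ X, f = 0)}

/-- A class of modules is a wide subcategory: closed under kernels, cokernels and
extensions. -/
def IsWide (W : Set (ModuleCat.{0} B)) : Prop :=
  (∀ (X Y : ModuleCat.{0} B) (f : X ⟶ Y), X ∈ W → Y ∈ W → kernel f ∈ W) ∧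
  (∀ (X Y : ModuleCat.{0} B) (f : X ⟶ Y), X ∈ W → Y ∈ W → cokernel f ∈ W) ∧
  (∀ (N E X : ModuleCat.{0} B) (i : N ⟶ E) (p : E ⟶ X) (w : i ≫ p = 0),
    (ShortComplex.mk i p w).ShortExact → N ∈ W → X ∈ W → E ∈ W)

end STT

namespace STT

/-! ### Gentle algebras

A gentle presentation is encoded by the combinatorial data of a finite quiver
`(V, E, src, tgt)` together with the set `rel` of composable paths of length two
generating the ideal `I` (condition (G4)), subject to the combinatorial conditions
(G1)–(G3), and the path algebra `kQ/I` is presented by generators and relations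
as a quotient of the free algebra on the vertices and arrows. -/

/-- The combinatorial data of a quiver with a chosen set of length-two relations.
`rel β α` means that the length-two path "`α` followed by `β`" belongs to `I`. -/
structure GentleQuiver : Type 1 where
  V : Type
  E : Type
  [fV : Fintype V]
  [fE : Fintype E]
  src : E → V
  tgt : E → V
  rel : E → E → Prop

namespace GentleQuiver

variable (D : GentleQuiver)

/-- Conditions (G1)–(G3) of a gentle presentation (condition (G4) holds by
construction, since the ideal is generated by the chosen paths of length two):
(G1) each vertex is the source of at most two arrows and the target of at most two
arrows; (G2) for each arrow `α` there is at most one `β` with `βα ∈ I` and at most one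
`γ` with `γα ∉ I`; (G3) dually on the other side. -/
def Conds : Prop :=
  (∀ β α, D.rel β α → D.src β = D.tgt α) ∧
  (∀ v : D.V, ∀ a b c : D.E, D.src a = v → D.src b = v → D.src c = v →
    a = b ∨ a = c ∨ b = c) ∧
  (∀ v : D.V, ∀ a b c : D.E, D.tgt a = v → D.tgt b = v → D.tgt c = v →
    a = b ∨ a = c ∨ b = c) ∧
  (∀ α β β', D.rel β α → D.rel β' α → β = β') ∧
  (∀ α γ γ', D.src γ = D.tgt α → ¬ D.rel γ α → D.src γ' = D.tgt α → ¬ D.rel γ' α →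
    γ = γ') ∧
  (∀ α β β', D.rel α β → D.rel α β' → β = β') ∧
  (∀ α γ γ', D.tgt γ = D.src α → ¬ D.rel α γ → D.tgt γ' = D.src α → ¬ D.rel α γ' →
    γ = γ')

/-- The defining relations of the quotient `kQ/I` of the free algebra on the vertices
(as orthogonal idempotents summing to `1`) and the arrows (composing according to the
quiver structure), where `I` is generated by the length-two paths in `rel`. -/
def rels (k : Type) [CommRing k] :
    FreeAlgebra k (D.V ⊕ D.E) → FreeAlgebra k (D.V ⊕ D.E) → Prop := fun x y =>
  letI := D.fV
  (∃ v w : D.V, v ≠ w ∧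
    x = FreeAlgebra.ι k (Sum.inl v) * FreeAlgebra.ι k (Sum.inl w) ∧ y = 0) ∨
  (∃ v : D.V, x = FreeAlgebra.ι k (Sum.inl v) * FreeAlgebra.ι k (Sum.inl v) ∧
    y = FreeAlgebra.ι k (Sum.inl v)) ∨
  (x = (Finset.univ.sum fun v : D.V => FreeAlgebra.ι k (Sum.inl v)) ∧ y = 1) ∨
  (∃ a : D.E, x = FreeAlgebra.ι k (Sum.inl (D.tgt a)) * FreeAlgebra.ι k (Sum.inr a) ∧
    y = FreeAlgebra.ι k (Sum.inr a)) ∨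
  (∃ a : D.E, x = FreeAlgebra.ι k (Sum.inr a) * FreeAlgebra.ι k (Sum.inl (D.src a)) ∧
    y = FreeAlgebra.ι k (Sum.inr a)) ∨
  (∃ (a : D.E) (v : D.V), v ≠ D.tgt a ∧
    x = FreeAlgebra.ι k (Sum.inl v) * FreeAlgebra.ι k (Sum.inr a) ∧ y = 0) ∨
  (∃ (a : D.E) (v : D.V), v ≠ D.src a ∧
    x = FreeAlgebra.ι k (Sum.inr a) * FreeAlgebra.ι k (Sum.inl v) ∧ y = 0) ∨
  (∃ β α : D.E, D.rel β α ∧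
    x = FreeAlgebra.ι k (Sum.inr β) * FreeAlgebra.ι k (Sum.inr α) ∧ y = 0)

end GentleQuiver

/-- `A` is a gentle `k`-algebra: `A` is finite-dimensional over `k` and admits a
presentation `A ≅ kQ/I` for a gentle quiver with relations `(Q, I)`, i.e. satisfying
conditions (G1)–(G4). -/
def IsGentleAlgebra (k : Type) [Field k] (A : Type) [Ring A] [Algebra k A] : Prop :=
  Module.Finite k A ∧
    ∃ D : GentleQuiver, D.Conds ∧ Nonempty (A ≃ₐ[k] RingQuot (D.rels k))

end STT

/-!
Transport `e` along a presentation `A ≃ kQ/I`. Killing the arrows maps `kQ/I` onto `k^{Q₀}`,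
and the kernel of this map is nil: grading by path length embeds `kQ/I` into `(kQ/I)[X]`, an
element of the kernel lands in `X · (kQ/I)[X]`, and finite dimensionality bounds the degrees.
So idempotents with the same image in `k^{Q₀}` are conjugate, and `e` becomes conjugate to a
sum `e_S` of vertex idempotents, which generates the same ideal. Finally `(kQ/I)/⟨e_S⟩` is
presented by the quiver with the vertices of `S` and the arrows at them deleted, and (G1)–(G3)
pass to such a subquiver.
-/

open Polynomial

theorem exists_forall_natDegree_le {k M R : Type*} [CommSemiring k] [AddCommMonoid M]
    [Module k M] [Module.Finite k M] [Semiring R] [Module k R] (f : M →ₗ[k] R[X]) :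
    ∃ N, ∀ x, (f x).natDegree ≤ N := by
  obtain ⟨s, hs⟩ := Module.Finite.fg_top (R := k) (M := M)
  refine ⟨s.sup fun x => (f x).natDegree, fun x => ?_⟩
  have hx : x ∈ Submodule.span k (s : Set M) := hs ▸ Submodule.mem_top
  induction hx using Submodule.span_induction with
  | mem y hy => exact Finset.le_sup (f := fun x => (f x).natDegree) hy
  | zero => simp
  | add y z _ _ hy hz => rw [map_add]; exact (natDegree_add_le _ _).trans (max_le hy hz)
  | smul c y _ hy => rw [map_smul]; exact (natDegree_smul_le _ _).trans hy

theorem isNilpotent_of_coeff_zero_eq_zero {k R S : Type*} [CommSemiring k] [Semiring R]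
    [Semiring S] [Algebra k R] [Algebra k S] [Module.Finite k R] (φ : R →ₐ[k] S[X])
    (hφ : Function.Injective φ) {x : R} (hx : (φ x).coeff 0 = 0) : IsNilpotent x := by
  obtain ⟨N, hN⟩ := exists_forall_natDegree_le φ.toLinearMap
  have hdvd : X ^ (N + 1) ∣ φ (x ^ (N + 1)) := by
    obtain ⟨q, hq⟩ := X_dvd_iff.mpr hx
    rw [map_pow, hq, (commute_X q).mul_pow]
    exact dvd_mul_right _ _
  refine ⟨N + 1, hφ ?_⟩
  ext i
  rw [map_zero, coeff_zero]
  rcases Nat.lt_or_ge i (N + 1) with hi | hi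
  · exact X_pow_dvd_iff.mp hdvd i hi
  · exact coeff_eq_zero_of_natDegree_lt ((hN _).trans_lt hi)

theorem exists_isUnit_mul_eq_mul_of_ker_isNilpotent {R S : Type*} [Ring R] [Ring S]
    (f : R →+* S) (h : ∀ x ∈ RingHom.ker f, IsNilpotent x) {e e' : R}
    (he : IsIdempotentElem e) (he' : IsIdempotentElem e') (hee' : f e = f e') :
    ∃ u, IsUnit u ∧ u * e = e' * u := by
  -- `u` maps to `c² + (1 - c)² = 1`, where `c = f e = f e'`.
  set u := e' * e + (1 - e') * (1 - e)
  have hu : u - 1 ∈ RingHom.ker f := by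
    have hc := he.map f
    simp only [RingHom.mem_ker, u, map_sub, map_add, map_mul, map_one, ← hee', hc.eq,
      hc.one_sub.eq, add_sub_cancel, sub_self]
  refine ⟨u, by simpa using (h _ hu).isUnit_add_one, ?_⟩
  simp only [u, add_mul, mul_add, mul_assoc, he.eq, he.one_sub_mul_self, mul_zero, add_zero,
    ← mul_assoc e' (1 - e'), he'.mul_one_sub_self, zero_mul, ← mul_assoc e' e', he'.eq]

namespace CompleteOrthogonalIdempotents

variable {k R I : Type*} [CommSemiring k] [Semiring R] [Algebra k R] [Fintype I] {e : I → R}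

noncomputable def piAlgHom (he : CompleteOrthogonalIdempotents e) : (I → k) →ₐ[k] R :=
  AlgHom.ofLinearMap (Fintype.linearCombination k e)
    (by simp [Fintype.linearCombination_apply, he.complete])
    (fun c d => by
      classical
      simp only [Fintype.linearCombination_apply, Finset.sum_mul, Finset.mul_sum, Pi.mul_apply,
        smul_mul_smul_comm, he.mul_eq, smul_ite, smul_zero, Finset.sum_ite_eq', Finset.mem_univ,
        if_true, mul_smul])

theorem piAlgHom_apply (he : CompleteOrthogonalIdempotents e) (c : I → k) :
    he.piAlgHom c = ∑ i, c i • e i :=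
  Fintype.linearCombination_apply k e c

end CompleteOrthogonalIdempotents

section FactorBy

variable {k A B : Type*} [CommSemiring k] [Ring A] [Ring B] [Algebra k A] [Algebra k B]

abbrev FactorBy (x : A) : Type _ := RingQuot (fun a b : A => a = x ∧ b = 0)

namespace FactorBy

variable (k) in
noncomputable abbrev mk (x : A) : A →ₐ[k] FactorBy x := RingQuot.mkAlgHom k _

@[simp]
theorem mk_self (x : A) : mk k x x = 0 := by
  simpa using RingQuot.mkAlgHom_rel k (s := fun a b : A => a = x ∧ b = 0) ⟨rfl, rfl⟩

theorem mk_surjective (x : A) : Function.Surjective (mk k x) :=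
  RingQuot.mkAlgHom_surjective k _

noncomputable def lift {x : A} (f : A →ₐ[k] B) (hf : f x = 0) : FactorBy x →ₐ[k] B :=
  RingQuot.liftAlgHom k ⟨f, by rintro _ _ ⟨rfl, rfl⟩; rw [hf, map_zero]⟩

@[simp]
theorem lift_mk {x : A} (f : A →ₐ[k] B) (hf : f x = 0) (a : A) : lift f hf (mk k x a) = f a :=
  RingQuot.liftAlgHom_mkAlgHom_apply k f _ a

@[ext]
theorem algHom_ext {x : A} {f g : FactorBy x →ₐ[k] B} (h : f.comp (mk k x) = g.comp (mk k x)) :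
    f = g :=
  RingQuot.ringQuot_ext' k f g h

noncomputable def congr (ψ : A ≃ₐ[k] B) {x : A} {y : B} (hx : mk k y (ψ x) = 0)
    (hy : mk k x (ψ.symm y) = 0) : FactorBy x ≃ₐ[k] FactorBy y :=
  AlgEquiv.ofAlgHom (lift ((mk k y).comp ψ.toAlgHom) (by simpa using hx))
    (lift ((mk k x).comp ψ.symm.toAlgHom) (by simpa using hy)) (by ext; simp) (by ext; simp)

noncomputable def congrOfConj {x y u : A} (hu : IsUnit u) (h : u * x = y * u) :
    FactorBy x ≃ₐ[k] FactorBy y :=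
  congr AlgEquiv.refl
    (by
      have hx : x = ↑hu.unit⁻¹ * (y * u) := by
        rw [← h, ← mul_assoc, hu.val_inv_mul, one_mul]
      simp [hx])
    (by
      have hy : y = u * x * ↑hu.unit⁻¹ := by rw [h, mul_assoc, hu.mul_val_inv, mul_one]
      simp [hy])

end FactorBy

end FactorBy

namespace STT.GentleQuiver

attribute [local instance] GentleQuiver.fV GentleQuiver.fE

section Presentation

variable (D : GentleQuiver) (k : Type) [CommRing k]

abbrev Alg : Type := RingQuot (D.rels k)

noncomputable def vertex (v : D.V) : D.Alg k := RingQuot.mkAlgHom k _ (FreeAlgebra.ι k (.inl v))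

noncomputable def arrow (a : D.E) : D.Alg k := RingQuot.mkAlgHom k _ (FreeAlgebra.ι k (.inr a))

variable {D k}

theorem completeOrthogonalIdempotents_vertex : CompleteOrthogonalIdempotents (D.vertex k) where
  idem v := by
    simpa [vertex, IsIdempotentElem] using
      RingQuot.mkAlgHom_rel k (s := D.rels k) (Or.inr (Or.inl ⟨v, rfl, rfl⟩))
  ortho v w hvw := by
    simpa [vertex] using RingQuot.mkAlgHom_rel k (s := D.rels k) (Or.inl ⟨v, w, hvw, rfl, rfl⟩)
  complete := by
    simpa [vertex] using
      RingQuot.mkAlgHom_rel k (s := D.rels k) (Or.inr (Or.inr (Or.inl ⟨rfl, rfl⟩)))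

theorem vertex_tgt_mul_arrow (a : D.E) : D.vertex k (D.tgt a) * D.arrow k a = D.arrow k a := by
  simpa [vertex, arrow] using RingQuot.mkAlgHom_rel k (s := D.rels k)
    (Or.inr (Or.inr (Or.inr (Or.inl ⟨a, rfl, rfl⟩))))

theorem arrow_mul_vertex_src (a : D.E) : D.arrow k a * D.vertex k (D.src a) = D.arrow k a := by
  simpa [vertex, arrow] using RingQuot.mkAlgHom_rel k (s := D.rels k)
    (Or.inr (Or.inr (Or.inr (Or.inr (Or.inl ⟨a, rfl, rfl⟩)))))

theorem arrow_mul_arrow_of_rel {b a : D.E} (h : D.rel b a) : D.arrow k b * D.arrow k a = 0 := by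
  simpa [arrow] using RingQuot.mkAlgHom_rel k (s := D.rels k)
    (Or.inr (Or.inr (Or.inr (Or.inr (Or.inr (Or.inr (Or.inr ⟨b, a, h, rfl, rfl⟩)))))))

variable {B : Type*} [Ring B] [Algebra k B]

/-- The relations `e_v α = 0` for `v ≠ t(α)` and `α e_v = 0` for `v ≠ s(α)` follow from the
others, so they are not hypotheses. -/
noncomputable def lift (f : D.V → B) (g : D.E → B) (hf : CompleteOrthogonalIdempotents f)
    (htgt : ∀ a, f (D.tgt a) * g a = g a) (hsrc : ∀ a, g a * f (D.src a) = g a)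
    (hrel : ∀ b a, D.rel b a → g b * g a = 0) : D.Alg k →ₐ[k] B :=
  RingQuot.liftAlgHom k ⟨FreeAlgebra.lift k (Sum.elim f g), by
    rintro x y (⟨v, w, hvw, rfl, rfl⟩ | ⟨v, rfl, rfl⟩ | ⟨rfl, rfl⟩ | ⟨a, rfl, rfl⟩ | ⟨a, rfl, rfl⟩ |
      ⟨a, v, hv, rfl, rfl⟩ | ⟨a, v, hv, rfl, rfl⟩ | ⟨b, a, hba, rfl, rfl⟩) <;>
      simp only [map_mul, map_sum, map_one, map_zero, FreeAlgebra.lift_ι_apply, Sum.elim_inl,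
        Sum.elim_inr]
    · exact hf.ortho hvw
    · exact (hf.idem v).eq
    · exact hf.complete
    · exact htgt a
    · exact hsrc a
    · rw [← htgt a, ← mul_assoc, hf.ortho hv, zero_mul]
    · rw [← hsrc a, mul_assoc, hf.ortho (Ne.symm hv), mul_zero]
    · exact hrel b a hba⟩

section Lift

variable {f : D.V → B} {g : D.E → B} {hf : CompleteOrthogonalIdempotents f}
  {htgt : ∀ a, f (D.tgt a) * g a = g a} {hsrc : ∀ a, g a * f (D.src a) = g a}
  {hrel : ∀ b a, D.rel b a → g b * g a = 0}

@[simp]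
theorem lift_vertex (v : D.V) : lift f g hf htgt hsrc hrel (D.vertex k v) = f v := by
  simp [lift, vertex, RingQuot.liftAlgHom_mkAlgHom_apply]

@[simp]
theorem lift_arrow (a : D.E) : lift f g hf htgt hsrc hrel (D.arrow k a) = g a := by
  simp [lift, arrow, RingQuot.liftAlgHom_mkAlgHom_apply]

end Lift

theorem algHom_ext {φ ψ : D.Alg k →ₐ[k] B} (hv : ∀ v, φ (D.vertex k v) = ψ (D.vertex k v))
    (ha : ∀ a, φ (D.arrow k a) = ψ (D.arrow k a)) : φ = ψ :=
  RingQuot.ringQuot_ext' k _ _ (FreeAlgebra.hom_ext (funext fun | .inl v => hv v | .inr a => ha a))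

end Presentation

section SemisimpleQuotient

variable {D : GentleQuiver} {k : Type} [CommRing k]

variable (D k) in
open Classical in
noncomputable def toPi : D.Alg k →ₐ[k] (D.V → k) :=
  lift (Pi.single · 1) 0 (CompleteOrthogonalIdempotents.single _) (by simp) (by simp) (by simp)

@[simp]
theorem toPi_vertex [DecidableEq D.V] (v : D.V) : D.toPi k (D.vertex k v) = Pi.single v 1 := by
  rw [toPi, lift_vertex]
  congr
  exact Subsingleton.elim _ _

@[simp]
theorem toPi_arrow (a : D.E) : D.toPi k (D.arrow k a) = 0 := by
  simp [toPi]

variable (D k) in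
noncomputable def vertexSum (S : Finset D.V) : D.Alg k := ∑ v ∈ S, D.vertex k v

theorem isIdempotentElem_vertexSum (S : Finset D.V) : IsIdempotentElem (D.vertexSum k S) :=
  completeOrthogonalIdempotents_vertex.isIdempotentElem_sum

theorem exists_toPi_vertexSum_eq [IsDomain k] {c : D.V → k} (hc : IsIdempotentElem c) :
    ∃ S, D.toPi k (D.vertexSum k S) = c := by
  classical
  refine ⟨Finset.univ.filter (c · = 1), funext fun w => ?_⟩
  simp only [vertexSum, map_sum, toPi_vertex, Finset.sum_apply, Finset.sum_pi_single,
    Finset.mem_filter, Finset.mem_univ, true_and]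
  rcases IsIdempotentElem.iff_eq_zero_or_one.mp (congrFun hc w) with h | h <;> simp [h]

noncomputable def pathLengthGrading : D.Alg k →ₐ[k] (D.Alg k)[X] :=
  lift (fun v => C (D.vertex k v)) (fun a => C (D.arrow k a) * X)
    (completeOrthogonalIdempotents_vertex.map C)
    (fun a => by rw [← mul_assoc, ← C_mul, vertex_tgt_mul_arrow])
    (fun a => by rw [mul_assoc, X_mul, ← mul_assoc, ← C_mul, arrow_mul_vertex_src])
    (fun b a h => by
      rw [mul_assoc, ← mul_assoc X, X_mul, ← mul_assoc, ← mul_assoc, ← C_mul,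
        arrow_mul_arrow_of_rel h, C_0, zero_mul, zero_mul])

theorem pathLengthGrading_injective :
    Function.Injective (pathLengthGrading (D := D) (k := k)) := by
  let evalOne := eval₂AlgHom (AlgHom.id k (D.Alg k)) 1 fun _ => Commute.one_right _
  have h : evalOne.comp pathLengthGrading = AlgHom.id k _ :=
    algHom_ext (by simp [evalOne, pathLengthGrading]) (by simp [evalOne, pathLengthGrading])
  exact Function.LeftInverse.injective (g := evalOne) (AlgHom.congr_fun h)

theorem pathLengthGrading_coeff_zero (x : D.Alg k) :
    (pathLengthGrading x).coeff 0 = completeOrthogonalIdempotents_vertex.piAlgHom (D.toPi k x) := by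
  classical
  let evalZero := eval₂AlgHom (AlgHom.id k (D.Alg k)) 0 fun _ => Commute.zero_right _
  have h : evalZero.comp pathLengthGrading =
      completeOrthogonalIdempotents_vertex.piAlgHom.comp (D.toPi k) :=
    algHom_ext (by simp [evalZero, pathLengthGrading, CompleteOrthogonalIdempotents.piAlgHom_apply,
      Pi.single_apply]) (by simp [evalZero, pathLengthGrading])
  simpa [evalZero, eval₂_at_zero] using AlgHom.congr_fun h x

theorem isNilpotent_of_toPi_eq_zero [Module.Finite k (D.Alg k)] {x : D.Alg k}
    (hx : D.toPi k x = 0) : IsNilpotent x :=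
  isNilpotent_of_coeff_zero_eq_zero pathLengthGrading pathLengthGrading_injective (by
    rw [pathLengthGrading_coeff_zero, hx, map_zero])

theorem exists_isUnit_mul_eq_mul_vertexSum [IsDomain k] [Module.Finite k (D.Alg k)]
    {ε : D.Alg k} (hε : IsIdempotentElem ε) :
    ∃ S u, IsUnit u ∧ u * ε = D.vertexSum k S * u := by
  obtain ⟨S, hS⟩ := exists_toPi_vertexSum_eq (hε.map (D.toPi k))
  exact ⟨S, exists_isUnit_mul_eq_mul_of_ker_isNilpotent (D.toPi k : D.Alg k →+* D.V → k)
    (fun _ hx => isNilpotent_of_toPi_eq_zero hx) hε (isIdempotentElem_vertexSum S) hS.symm⟩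

end SemisimpleQuotient

section Delete

variable (D : GentleQuiver)

noncomputable def delete (S : Finset D.V) : GentleQuiver where
  V := {v // v ∉ S}
  E := {a // D.src a ∉ S ∧ D.tgt a ∉ S}
  fV := Fintype.ofFinite _
  fE := Fintype.ofFinite _
  src a := ⟨D.src a.1, a.2.1⟩
  tgt a := ⟨D.tgt a.1, a.2.2⟩
  rel b a := D.rel b.1 a.1

variable {D}

theorem Conds.delete (h : D.Conds) (S : Finset D.V) : (D.delete S).Conds := by
  obtain ⟨h0, h1, h2, h3, h4, h5, h6⟩ := h
  exact ⟨fun b a hr => Subtype.ext (h0 _ _ hr),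
    fun v a b c ha hb hc => (h1 v.1 a.1 b.1 c.1 (congrArg Subtype.val ha) (congrArg Subtype.val hb)
      (congrArg Subtype.val hc)).imp Subtype.ext (.imp Subtype.ext Subtype.ext),
    fun v a b c ha hb hc => (h2 v.1 a.1 b.1 c.1 (congrArg Subtype.val ha) (congrArg Subtype.val hb)
      (congrArg Subtype.val hc)).imp Subtype.ext (.imp Subtype.ext Subtype.ext),
    fun a b b' hb hb' => Subtype.ext (h3 _ _ _ hb hb'),
    fun a g g' hg hng hg' hng' =>
      Subtype.ext (h4 _ _ _ (congrArg Subtype.val hg) hng (congrArg Subtype.val hg') hng'),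
    fun a b b' hb hb' => Subtype.ext (h5 _ _ _ hb hb'),
    fun a g g' hg hng hg' hng' =>
      Subtype.ext (h6 _ _ _ (congrArg Subtype.val hg) hng (congrArg Subtype.val hg') hng')⟩

variable {k : Type} [CommRing k] {S : Finset D.V}

theorem sum_vertex_delete_add_vertexSum :
    ∑ v : (D.delete S).V, D.vertex k v.1 + D.vertexSum k S = 1 := by
  classical
  rw [← completeOrthogonalIdempotents_vertex.complete,
    ← Fintype.sum_subtype_add_sum_subtype (· ∉ S), vertexSum,
    Finset.sum_subtype S (p := (¬· ∉ S)) (fun _ => not_not.symm)]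
  exact congrArg (· + _)
    (Fintype.sum_equiv (ι := (D.delete S).V) (κ := {v // v ∉ S}) (.refl _) _ _ fun _ => rfl)

variable (k S) in
open Classical in
noncomputable def vertexOrZero (v : D.V) : (D.delete S).Alg k :=
  if h : v ∈ S then 0 else (D.delete S).vertex k ⟨v, h⟩

variable (k S) in
open Classical in
noncomputable def arrowOrZero (a : D.E) : (D.delete S).Alg k :=
  if h : D.src a ∉ S ∧ D.tgt a ∉ S then (D.delete S).arrow k ⟨a, h⟩ else 0

theorem vertexOrZero_of_mem {v : D.V} (hv : v ∈ S) : vertexOrZero k S v = 0 := dif_pos hv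

theorem vertexOrZero_of_notMem {v : D.V} (hv : v ∉ S) :
    vertexOrZero k S v = (D.delete S).vertex k ⟨v, hv⟩ := dif_neg hv

theorem arrowOrZero_of_notMem {a : D.E} (ha : D.src a ∉ S ∧ D.tgt a ∉ S) :
    arrowOrZero k S a = (D.delete S).arrow k ⟨a, ha⟩ := dif_pos ha

theorem arrowOrZero_of_mem {a : D.E} (ha : ¬(D.src a ∉ S ∧ D.tgt a ∉ S)) :
    arrowOrZero k S a = 0 := dif_neg ha

theorem completeOrthogonalIdempotents_vertexOrZero :
    CompleteOrthogonalIdempotents (vertexOrZero k S) where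
  idem v := by
    by_cases hv : v ∈ S
    · rw [vertexOrZero_of_mem hv]; exact .zero
    · rw [vertexOrZero_of_notMem hv]; exact completeOrthogonalIdempotents_vertex.idem _
  ortho v w hvw := by
    change vertexOrZero k S v * vertexOrZero k S w = 0
    by_cases hv : v ∈ S
    · rw [vertexOrZero_of_mem hv, zero_mul]
    by_cases hw : w ∈ S
    · rw [vertexOrZero_of_mem hw, mul_zero]
    rw [vertexOrZero_of_notMem hv, vertexOrZero_of_notMem hw]
    exact completeOrthogonalIdempotents_vertex.ortho fun h => hvw (congrArg Subtype.val h)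
  complete := by
    classical
    rw [← Fintype.sum_subtype_add_sum_subtype (· ∈ S),
      Finset.sum_eq_zero fun v _ => vertexOrZero_of_mem v.2, zero_add,
      ← (completeOrthogonalIdempotents_vertex (D := D.delete S) (k := k)).complete]
    exact Fintype.sum_equiv (ι := {v // v ∉ S}) (κ := (D.delete S).V) (.refl _) _ _
      fun v => vertexOrZero_of_notMem v.2

theorem vertexOrZero_tgt_mul_arrowOrZero (a : D.E) :
    vertexOrZero k S (D.tgt a) * arrowOrZero k S a = arrowOrZero k S a := by
  by_cases ha : D.src a ∉ S ∧ D.tgt a ∉ S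
  · rw [vertexOrZero_of_notMem ha.2, arrowOrZero_of_notMem ha]
    exact vertex_tgt_mul_arrow (D := D.delete S) (k := k) ⟨a, ha⟩
  · rw [arrowOrZero_of_mem ha, mul_zero]

theorem arrowOrZero_mul_vertexOrZero_src (a : D.E) :
    arrowOrZero k S a * vertexOrZero k S (D.src a) = arrowOrZero k S a := by
  by_cases ha : D.src a ∉ S ∧ D.tgt a ∉ S
  · rw [vertexOrZero_of_notMem ha.1, arrowOrZero_of_notMem ha]
    exact arrow_mul_vertex_src (D := D.delete S) (k := k) ⟨a, ha⟩
  · rw [arrowOrZero_of_mem ha, zero_mul]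

theorem arrowOrZero_mul_arrowOrZero_of_rel {b a : D.E} (h : D.rel b a) :
    arrowOrZero k S b * arrowOrZero k S a = 0 := by
  by_cases hb : D.src b ∉ S ∧ D.tgt b ∉ S
  · by_cases ha : D.src a ∉ S ∧ D.tgt a ∉ S
    · rw [arrowOrZero_of_notMem hb, arrowOrZero_of_notMem ha]
      exact arrow_mul_arrow_of_rel (D := D.delete S) (k := k) h
    · rw [arrowOrZero_of_mem ha, mul_zero]
  · rw [arrowOrZero_of_mem hb, zero_mul]

variable (k S) in
noncomputable def toDelete : D.Alg k →ₐ[k] (D.delete S).Alg k :=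
  lift (vertexOrZero k S) (arrowOrZero k S) completeOrthogonalIdempotents_vertexOrZero
    vertexOrZero_tgt_mul_arrowOrZero arrowOrZero_mul_vertexOrZero_src
    fun _ _ => arrowOrZero_mul_arrowOrZero_of_rel

theorem toDelete_vertexSum : toDelete k S (D.vertexSum k S) = 0 := by
  simp only [vertexSum, map_sum, toDelete, lift_vertex]
  exact Finset.sum_eq_zero fun v hv => vertexOrZero_of_mem hv

theorem mk_vertex_of_mem {v : D.V} (hv : v ∈ S) :
    FactorBy.mk k (D.vertexSum k S) (D.vertex k v) = 0 := by
  rw [← completeOrthogonalIdempotents_vertex.toOrthogonalIdempotents.mul_sum_of_mem hv,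
    map_mul, ← vertexSum, FactorBy.mk_self, mul_zero]

theorem mk_arrow_of_mem {a : D.E} (ha : ¬(D.src a ∉ S ∧ D.tgt a ∉ S)) :
    FactorBy.mk k (D.vertexSum k S) (D.arrow k a) = 0 := by
  rcases not_and_or.mp ha with h | h
  · rw [← arrow_mul_vertex_src, map_mul, mk_vertex_of_mem (not_not.mp h), mul_zero]
  · rw [← vertex_tgt_mul_arrow, map_mul, mk_vertex_of_mem (not_not.mp h), zero_mul]

variable (k S) in
noncomputable def deleteToFactorBy : (D.delete S).Alg k →ₐ[k] FactorBy (D.vertexSum k S) :=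
  lift (fun v => FactorBy.mk k _ (D.vertex k v.1)) (fun a => FactorBy.mk k _ (D.arrow k a.1))
    ⟨(completeOrthogonalIdempotents_vertex.toOrthogonalIdempotents.embedding
      (.subtype _)).map _, by
        rw [← map_sum, eq_sub_of_add_eq sum_vertex_delete_add_vertexSum,
          map_sub, map_one, FactorBy.mk_self, sub_zero]⟩
    (fun a => by rw [← map_mul]; exact congrArg _ (vertex_tgt_mul_arrow a.1))
    (fun a => by rw [← map_mul]; exact congrArg _ (arrow_mul_vertex_src a.1))
    (fun b a h => by rw [← map_mul, arrow_mul_arrow_of_rel (D := D) h, map_zero])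

theorem deleteToFactorBy_vertexOrZero (v : D.V) :
    deleteToFactorBy k S (vertexOrZero k S v) = FactorBy.mk k (D.vertexSum k S) (D.vertex k v) := by
  by_cases hv : v ∈ S
  · rw [vertexOrZero_of_mem hv, map_zero, mk_vertex_of_mem hv]
  · rw [vertexOrZero_of_notMem hv]
    exact lift_vertex _

theorem deleteToFactorBy_arrowOrZero (a : D.E) :
    deleteToFactorBy k S (arrowOrZero k S a) = FactorBy.mk k (D.vertexSum k S) (D.arrow k a) := by
  by_cases ha : D.src a ∉ S ∧ D.tgt a ∉ S
  · rw [arrowOrZero_of_notMem ha]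
    exact lift_arrow _
  · rw [arrowOrZero_of_mem ha, map_zero, mk_arrow_of_mem ha]

variable (k S) in
noncomputable def deleteEquiv : (D.delete S).Alg k ≃ₐ[k] FactorBy (D.vertexSum k S) :=
  AlgEquiv.ofAlgHom (deleteToFactorBy k S) (FactorBy.lift (toDelete k S) toDelete_vertexSum)
    (FactorBy.algHom_ext <| algHom_ext
      (fun v => by simp [toDelete, deleteToFactorBy_vertexOrZero])
      (fun a => by simp [toDelete, deleteToFactorBy_arrowOrZero]))
    (algHom_ext (fun v => by simp [deleteToFactorBy, toDelete, vertexOrZero_of_notMem v.2]; rfl)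
      (fun a => by simp [deleteToFactorBy, toDelete, arrowOrZero_of_notMem a.2]; rfl))

end Delete

end STT.GentleQuiver

open STT in
theorem factor_of_gentle_by_idempotent_is_gentle_general
    (k : Type) [Field k]
    (A : Type) [Ring A] [Algebra k A]
    (hA : IsGentleAlgebra k A)
    (e : A) (he : IsIdempotentElem e) :
    IsGentleAlgebra k (RingQuot (fun a b : A => a = e ∧ b = 0)) := by
  obtain ⟨hfin, D, hD, ⟨ψ⟩⟩ := hA
  have : Module.Finite k (D.Alg k) := Module.Finite.equiv ψ.toLinearEquiv
  obtain ⟨S, u, hu, hconj⟩ := GentleQuiver.exists_isUnit_mul_eq_mul_vertexSum (he.map ψ)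
  refine ⟨Module.Finite.of_surjective (FactorBy.mk k e).toLinearMap (FactorBy.mk_surjective e),
    D.delete S, hD.delete S, ⟨?_⟩⟩
  exact (FactorBy.congr ψ (by simp) (by simp)).trans
    ((FactorBy.congrOfConj hu hconj).trans (GentleQuiver.deleteEquiv k S).symm)

open STT in
/-- **Lemma 2.1.** Let `A` be a finite-dimensional gentle algebra over an algebraically
closed field `k` and `e` an idempotent of `A`.  Then the factor algebra `A/⟨e⟩` of `A`
by the two-sided ideal generated by `e` (realized as the `RingQuot` by the relation
`e = 0`) is again a gentle algebra. -/
theorem factor_of_gentle_by_idempotent_is_gentle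
    (k : Type) [Field k] [IsAlgClosed k]
    (A : Type) [Ring A] [Algebra k A] [Module.Finite k A]
    (hA : IsGentleAlgebra k A)
    (e : A) (he : IsIdempotentElem e) :
    IsGentleAlgebra k (RingQuot (fun a b : A => a = e ∧ b = 0)) :=
  factor_of_gentle_by_idempotent_is_gentle_general k A hA e he
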